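/- arXiv:1601.06748 — 3 statements merged into one kernel-verified Lean document; each statement's English description precedes it below -/
import Mathlib

section
/- Let p > 0, γ > 0, V > 0, M ≥ 1, and let υ : Fin M → ℝ and S : Fin M → ℝ with S_m > 0 for all m. Define the queue update rule: given Q ≥ 0, if Q > V(υ_m + γp) for all m then Q' = max(Q - Δ/p, 0) for some Δ > 0; otherwise Q' = max(Q - T/p, 0) + 1 for some T ≥ 0. If Q ≤ V·(max_m υ_m + γp) + 1, then Q' ≤ V·(max_m υ_m + γp) + 1. -/
theorem stmt_1 (p γ V : ℝ) (hp : 0 < p) (hγ : 0 < γ) (hV : 0 < V)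
    (M : ℕ) (hM : 1 ≤ M) (υ S : Fin M → ℝ) (hS : ∀ m, 0 < S m)
    (υmax : ℝ) (hmax : IsGreatest (Set.range υ) υmax)
    (Q Q' : ℝ) (hQ : 0 ≤ Q)
    (hupd : ((∀ m, Q > V * (υ m + γ * p)) ∧ ∃ Δ > 0, Q' = max (Q - Δ / p) 0) ∨
      ((¬ ∀ m, Q > V * (υ m + γ * p)) ∧ ∃ T ≥ 0, Q' = max (Q - T / p) 0 + 1))
    (hQbd : Q ≤ V * (υmax + γ * p) + 1) :
    Q' ≤ V * (υmax + γ * p) + 1 := by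
  rcases hupd with ⟨_, Δ, hΔ, hQ'⟩ | ⟨hne, T, hT, hQ'⟩
  · rw [hQ']
    have : Q - Δ / p ≤ Q := by
      have : 0 < Δ / p := div_pos hΔ hp
      linarith
    exact le_trans (max_le (le_trans this hQbd) (by linarith)) le_rfl
  · push_neg at hne
    obtain ⟨m, hm⟩ := hne
    have hmm : υ m ≤ υmax := hmax.2 ⟨m, rfl⟩
    have h1 : Q ≤ V * (υmax + γ * p) := le_trans hm (by nlinarith)
    rw [hQ']
    have : Q - T / p ≤ Q := by
      have : 0 ≤ T / p := div_nonneg hT hp.le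
      linarith
    have : max (Q - T / p) 0 ≤ V * (υmax + γ * p) :=
      max_le (le_trans this h1) (le_trans hQ h1)
    linarith
end

section
/- Let K ≥ 1, let L : Fin (K+1) → ℝ be nonnegative with L 0 = 0, r, τ : Fin K → ℝ with τ_k ≥ p > 0 for all k, C ≥ 0, V > 0, u* ∈ ℝ. If L(k+1) - L(k) - V·r_k ≤ C - V·u*·τ_k for all k, then (Σ_k r_k)/(Σ_k τ_k) ≥ u* - C/(V·p). -/
theorem stmt_9 (K : ℕ) (hK : 1 ≤ K) (L : Fin (K + 1) → ℝ)
    (hLnn : ∀ k, 0 ≤ L k) (hL0 : L 0 = 0)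
    (p : ℝ) (hp : 0 < p)
    (r τ : Fin K → ℝ) (hτ : ∀ k, p ≤ τ k)
    (C : ℝ) (hC : 0 ≤ C) (V : ℝ) (hV : 0 < V) (ustar : ℝ)
    (hdrift : ∀ k : Fin K,
      L k.succ - L k.castSucc - V * r k ≤ C - V * ustar * τ k) :
    (∑ k, r k) / (∑ k, τ k) ≥ ustar - C / (V * p) := by
  have hsum : ∑ k : Fin K, (L k.succ - L k.castSucc - V * r k)
      ≤ ∑ k : Fin K, (C - V * ustar * τ k) :=
    Finset.sum_le_sum (fun k _ => hdrift k)
  have htel : ∑ k : Fin K, (L k.succ - L k.castSucc - V * r k)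
      = L (Fin.last K) - L 0 - V * ∑ k, r k := by
    rw [Finset.sum_sub_distrib, ← Finset.mul_sum]
    congr 1
    set g : ℕ → ℝ := fun i => if h : i < K + 1 then L ⟨i, h⟩ else 0 with hg
    have h : ∑ k : Fin K, (L k.succ - L k.castSucc)
        = ∑ i ∈ Finset.range K, (g (i+1) - g i) := by
      rw [← Fin.sum_univ_eq_sum_range (fun i => g (i+1) - g i) K]
      apply Finset.sum_congr rfl
      intro i _
      have h1 : (i : ℕ) + 1 < K + 1 := Nat.succ_lt_succ i.isLt
      have h2 : (i : ℕ) < K + 1 := Nat.lt_succ_of_lt i.isLt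
      simp only [hg, dif_pos h1, dif_pos h2]
      congr 1
    rw [h, Finset.sum_range_sub]
    have hK1 : K < K + 1 := Nat.lt_succ_self K
    have h0 : 0 < K + 1 := Nat.succ_pos K
    simp only [hg, dif_pos hK1, dif_pos h0]
    rfl
  have hrhs : ∑ k : Fin K, (C - V * ustar * τ k)
      = K * C - V * ustar * ∑ k, τ k := by
    rw [Finset.sum_sub_distrib, ← Finset.mul_sum]
    simp [mul_comm]
  rw [htel, hrhs, hL0] at hsum
  have hτsum : (K : ℝ) * p ≤ ∑ k, τ k := by
    calc (K : ℝ) * p = ∑ _k : Fin K, p := by simp [mul_comm]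
    _ ≤ ∑ k, τ k := Finset.sum_le_sum fun k _ => hτ k
  have hKpos : (0:ℝ) < K := by exact_mod_cast hK
  have hτpos : 0 < ∑ k, τ k := lt_of_lt_of_le (by positivity) hτsum
  have key : V * ustar * ∑ k, τ k - K * C ≤ V * ∑ k, r k := by
    have := hLnn (Fin.last K); linarith
  set d := C / (V * p) with hdd
  have hd : d * (V * p) = C := div_mul_cancel₀ C (by positivity)
  have hd0 : 0 ≤ d := by positivity
  rw [ge_iff_le, le_div_iff₀ hτpos]
  nlinarith [mul_nonneg (mul_nonneg hd0 hV.le) (sub_nonneg.2 hτsum), key, hd,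
    mul_pos hV hτpos]
end

section
/- Let p > 0, Ψ ≥ 0, Q ≥ 0, a ∈ [0, 1], T ≥ 0 with T² ≤ Ψ. With Q' = max(Q − T/p, 0) + a, it holds that Q'²/2 − Q²/2 ≤ (p² + Ψ)/(2p²) − Q(T/p − a). -/
/-- The Lyapunov drift bound for a queue with service `b` and arrivals `a`. -/
theorem sq_max_sub_add_sub_sq_le {Q a b : ℝ} (hQ : 0 ≤ Q) (ha : 0 ≤ a) (hb : 0 ≤ b) :
    (max (Q - b) 0 + a) ^ 2 - Q ^ 2 ≤ a ^ 2 + b ^ 2 - 2 * Q * (b - a) := by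
  have hsq : max (Q - b) 0 ^ 2 ≤ (Q - b) ^ 2 := by
    rcases le_total (Q - b) 0 with h | h
    · rw [max_eq_right h, zero_pow two_ne_zero]
      exact sq_nonneg _
    · rw [max_eq_left h]
  have hle : max (Q - b) 0 ≤ Q := max_le (by linarith) hQ
  nlinarith [mul_le_mul_of_nonneg_left hle ha]

theorem stmt_14_general (p Ψ Q a T : ℝ) (hp : 0 < p) (hQ : 0 ≤ Q)
    (ha0 : 0 ≤ a) (ha1 : a ≤ 1) (hT : 0 ≤ T) (hT2 : T ^ 2 ≤ Ψ) :
    (max (Q - T / p) 0 + a) ^ 2 / 2 - Q ^ 2 / 2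
      ≤ (p ^ 2 + Ψ) / (2 * p ^ 2) - Q * (T / p - a) := by
  have hdrift := sq_max_sub_add_sub_sq_le hQ ha0 (div_nonneg hT hp.le)
  have ha2 : a ^ 2 ≤ 1 := pow_le_one₀ ha0 ha1
  have hservice : (T / p) ^ 2 ≤ Ψ / p ^ 2 := by
    rw [div_pow]
    exact div_le_div_of_nonneg_right hT2 (by positivity)
  have hconst : (p ^ 2 + Ψ) / (2 * p ^ 2) = (1 + Ψ / p ^ 2) / 2 := by
    field_simp
  rw [hconst]
  linarith

theorem stmt_14 (p Ψ Q a T : ℝ) (hp : 0 < p) (hΨ : 0 ≤ Ψ) (hQ : 0 ≤ Q)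
    (ha0 : 0 ≤ a) (ha1 : a ≤ 1) (hT : 0 ≤ T) (hT2 : T ^ 2 ≤ Ψ) :
    (max (Q - T / p) 0 + a) ^ 2 / 2 - Q ^ 2 / 2
      ≤ (p ^ 2 + Ψ) / (2 * p ^ 2) - Q * (T / p - a) :=
  stmt_14_general p Ψ Q a T hp hQ ha0 ha1 hT hT2
end
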